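/- Let R be a prime, right noetherian, ℕ-graded k-algebra and U a graded uniform right ideal of R. Then there exist nonnegative integers n₁,…,n_t such that ⊕_{i=1}^t U(−n_i) is isomorphic (as graded module) to an essential graded right ideal of R. -/
import Mathlib


universe u v

open DirectSum


section helpers
variable {k : Type*} {R : Type*} [Field k] [Ring R] [Algebra k R]
    (𝒜 : ℕ → Submodule k R) [GradedRing 𝒜]

/-- The degree-`m` component of `v`. -/
noncomputable def hcmp (v : R) (m : ℕ) : R := (DirectSum.decompose 𝒜 v m : R)

lemma cmp_hom (m : ℕ) : ∃ f : R →+ R, ∀ v, f v = hcmp 𝒜 v m := by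
  refine ⟨{ toFun := fun v => hcmp 𝒜 v m, map_zero' := ?_, map_add' := ?_ }, fun _ => rfl⟩
  · simp [hcmp]
  · intro a b; simp [hcmp]

lemma cmp_sum {ι : Type*} (s : Finset ι) (f : ι → R) (m : ℕ) :
    hcmp 𝒜 (∑ i ∈ s, f i) m = ∑ i ∈ s, hcmp 𝒜 (f i) m := by
  obtain ⟨g, hg⟩ := cmp_hom 𝒜 m
  rw [← hg, map_sum]; simp [hg]

lemma cmp_same {v : R} {m : ℕ} (hv : v ∈ 𝒜 m) : hcmp 𝒜 v m = v :=
  DirectSum.decompose_of_mem_same 𝒜 hv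

lemma cmp_ne {v : R} {m n : ℕ} (hv : v ∈ 𝒜 m) (h : m ≠ n) : hcmp 𝒜 v n = 0 :=
  DirectSum.decompose_of_mem_ne 𝒜 hv h

lemma cmp_mem (v : R) (m : ℕ) : hcmp 𝒜 v m ∈ 𝒜 m := (decompose 𝒜 v m).2

lemma sum_cmp [∀ (i : ℕ) (x : 𝒜 i), Decidable (x ≠ 0)] (v : R) :
    ∑ m ∈ (decompose 𝒜 v).support, hcmp 𝒜 v m = v :=
  DirectSum.sum_support_decompose 𝒜 v

/-- component of a product with a homogeneous element on the right -/
lemma cmp_mul_right {x : R} {d : ℕ} (hx : x ∈ 𝒜 d) (r : R) (j : ℕ) :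
    hcmp 𝒜 (r * x) j = if d ≤ j then hcmp 𝒜 r (j - d) * x else 0 := by
  classical
  conv_lhs => rw [← sum_cmp 𝒜 r, Finset.sum_mul, cmp_sum]
  have hterm : ∀ e : ℕ, hcmp 𝒜 (hcmp 𝒜 r e * x) j
      = if e + d = j then hcmp 𝒜 r e * x else 0 := by
    intro e
    have hmem : hcmp 𝒜 r e * x ∈ 𝒜 (e + d) :=
      SetLike.mul_mem_graded (cmp_mem 𝒜 r e) hx
    by_cases h : e + d = j
    · rw [if_pos h, ← h]; exact cmp_same 𝒜 hmem
    · rw [if_neg h]; exact cmp_ne 𝒜 hmem h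
  rw [Finset.sum_congr rfl fun e _ => hterm e]
  by_cases hdj : d ≤ j
  · rw [if_pos hdj]
    have : ∀ e : ℕ, (e + d = j) = (e = j - d) := by
      intro e; apply propext; omega
    simp_rw [this]
    rw [Finset.sum_ite_eq' (decompose 𝒜 r).support (j - d)
      (fun e => hcmp 𝒜 r e * x)]
    by_cases hs : j - d ∈ (decompose 𝒜 r).support
    · rw [if_pos hs]
    · rw [if_neg hs]
      have : hcmp 𝒜 r (j - d) = 0 := by
        have := DFinsupp.notMem_support_iff.mp hs
        simp [hcmp, this]
      rw [this, zero_mul]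
  · rw [if_neg hdj]
    apply Finset.sum_eq_zero
    intro e _
    rw [if_neg (by omega)]

/-- component of a product with a homogeneous element on the left -/
lemma cmp_mul_left {x : R} {d : ℕ} (hx : x ∈ 𝒜 d) (v : R) (j : ℕ) :
    hcmp 𝒜 (x * v) j = if d ≤ j then x * hcmp 𝒜 v (j - d) else 0 := by
  classical
  conv_lhs => rw [← sum_cmp 𝒜 v, Finset.mul_sum, cmp_sum]
  have hterm : ∀ e : ℕ, hcmp 𝒜 (x * hcmp 𝒜 v e) j
      = if d + e = j then x * hcmp 𝒜 v e else 0 := by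
    intro e
    have hmem : x * hcmp 𝒜 v e ∈ 𝒜 (d + e) :=
      SetLike.mul_mem_graded hx (cmp_mem 𝒜 v e)
    by_cases h : d + e = j
    · rw [if_pos h, ← h]; exact cmp_same 𝒜 hmem
    · rw [if_neg h]; exact cmp_ne 𝒜 hmem h
  rw [Finset.sum_congr rfl fun e _ => hterm e]
  by_cases hdj : d ≤ j
  · rw [if_pos hdj]
    have : ∀ e : ℕ, (d + e = j) = (e = j - d) := by
      intro e; apply propext; omega
    simp_rw [this]
    rw [Finset.sum_ite_eq' (decompose 𝒜 v).support (j - d)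
      (fun e => x * hcmp 𝒜 v e)]
    by_cases hs : j - d ∈ (decompose 𝒜 v).support
    · rw [if_pos hs]
    · rw [if_neg hs]
      have : hcmp 𝒜 v (j - d) = 0 := by
        have := DFinsupp.notMem_support_iff.mp hs
        simp [hcmp, this]
      rw [this, mul_zero]
  · rw [if_neg hdj]
    apply Finset.sum_eq_zero
    intro e _
    rw [if_neg (by omega)]


section prime
variable {R : Type*} [Ring R]

/-- left annihilator of `a` -/
noncomputable def lann (a : R) : Submodule R R :=
  LinearMap.ker (LinearMap.toSpanSingleton R R a)

lemma mem_lann {a z : R} : z ∈ lann a ↔ z * a = 0 := by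
  simp [lann, LinearMap.mem_ker, LinearMap.toSpanSingleton_apply, smul_eq_mul]

/-- In a prime left noetherian ring, a nonzero element cannot have an essential
left annihilator. -/
lemma essential_lann_eq_zero [IsNoetherianRing R]
    (hprime : ∀ a b : R, (∀ r : R, a * r * b = 0) → a = 0 ∨ b = 0)
    (a : R) (hess : ∀ Y : Submodule R R, Y ≠ ⊥ → Y ⊓ lann a ≠ ⊥) : a = 0 := by
  by_contra ha
  set S : Set (Submodule R R) :=
    {I | ∃ b : R, b ≠ 0 ∧ I = lann b ∧ ∀ Y : Submodule R R, Y ≠ ⊥ → Y ⊓ lann b ≠ ⊥} with hS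
  have hSne : S.Nonempty := ⟨lann a, a, ha, rfl, hess⟩
  obtain ⟨I, hIS, hImax⟩ :=
    (set_has_maximal_iff_noetherian.mpr (inferInstance : IsNoetherian R R)) S hSne
  obtain ⟨b, hb0, rfl, hbess⟩ := hIS
  have hbrb : ∀ r : R, b * r * b = 0 := by
    intro r
    by_contra hbrb
    have hbr : b * r ≠ 0 := by
      intro h; apply hbrb; rw [h, zero_mul]
    -- lann (b*r*b) is in S and contains lann b, so equals lann b by maximality
    have hle : lann b ≤ lann (b * r * b) := by
      intro t ht
      rw [mem_lann] at ht ⊢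
      have : t * (b * r * b) = t * b * (r * b) := by simp [mul_assoc]
      rw [this, ht, zero_mul]
    have hessb : ∀ Y : Submodule R R, Y ≠ ⊥ → Y ⊓ lann (b * r * b) ≠ ⊥ := by
      intro Y hY
      intro hbot
      exact hbess Y hY (eq_bot_iff.mpr (le_trans
        (le_of_eq (by rfl)) (hbot ▸ inf_le_inf_left Y hle)))
    have hmem : lann (b * r * b) ∈ S := ⟨b * r * b, hbrb, rfl, hessb⟩
    have heq : lann (b * r * b) = lann b := by
      by_contra hne
      exact hImax _ hmem (lt_of_le_of_ne hle (Ne.symm hne))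
    -- now use essentiality of lann b against span {b * r}
    have hYne : Submodule.span R {b * r} ≠ ⊥ := by
      simpa [Submodule.span_singleton_eq_bot] using hbr
    obtain ⟨z, hzm, hz0⟩ :=
      Submodule.ne_bot_iff _ |>.mp (hbess _ hYne)
    rw [Submodule.mem_inf] at hzm
    obtain ⟨hz1, hz2⟩ := hzm
    obtain ⟨s, rfl⟩ := Submodule.mem_span_singleton.mp hz1
    rw [mem_lann, smul_eq_mul] at hz2
    have hs : s ∈ lann (b * r * b) := by
      rw [mem_lann]
      have : s * (b * r * b) = s * (b * r) * b := by simp [mul_assoc]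
      rw [this, hz2]
    rw [heq, mem_lann] at hs
    apply hz0
    rw [smul_eq_mul, ← mul_assoc, hs, zero_mul]
  rcases hprime b b hbrb with h | h <;> exact hb0 h

/-- If `U` is a uniform left ideal and right multiplication by `x` does not kill `U`,
then right multiplication by `x` is injective on `U`. -/
lemma mul_right_inj_on_uniform [IsNoetherianRing R]
    (hprime : ∀ a b : R, (∀ r : R, a * r * b = 0) → a = 0 ∨ b = 0)
    (U : Submodule R R)
    (hUuniform : ∀ A B : Submodule R R, A ≤ U → B ≤ U → A ≠ ⊥ → B ≠ ⊥ → A ⊓ B ≠ ⊥)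
    {x u₀ : R} (hu₀U : u₀ ∈ U) (hu₀x : u₀ * x ≠ 0) :
    ∀ u ∈ U, u * x = 0 → u = 0 := by
  set K : Submodule R R := U ⊓ lann x with hK
  have hKbot : K = ⊥ := by
    by_contra hKne
    apply hu₀x
    apply essential_lann_eq_zero hprime
    intro Y hY
    by_cases hYu : ∀ y ∈ Y, y * u₀ = 0
    · have hle : Y ≤ lann (u₀ * x) := by
        intro y hy
        rw [mem_lann, ← mul_assoc, hYu y hy, zero_mul]
      rw [inf_eq_left.mpr hle]
      exact hY
    · push_neg at hYu
      obtain ⟨y₀, hy₀Y, hy₀⟩ := hYu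
      set B : Submodule R R := Submodule.map (LinearMap.toSpanSingleton R R u₀) Y with hB
      have hBU : B ≤ U := by
        rintro b ⟨y, hy, rfl⟩
        rw [LinearMap.toSpanSingleton_apply]
        exact U.smul_mem y hu₀U
      have hBne : B ≠ ⊥ := by
        rw [Submodule.ne_bot_iff]
        exact ⟨y₀ * u₀, ⟨y₀, hy₀Y, by rw [LinearMap.toSpanSingleton_apply, smul_eq_mul]⟩, hy₀⟩
      obtain ⟨z, hzm, hz0⟩ :=
        Submodule.ne_bot_iff _ |>.mp (hUuniform B K hBU inf_le_left hBne hKne)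
      rw [Submodule.mem_inf] at hzm
      obtain ⟨hzB, hzK⟩ := hzm
      obtain ⟨y, hyY, rfl⟩ := hzB
      rw [LinearMap.toSpanSingleton_apply, smul_eq_mul] at hzK hz0
      rw [Submodule.ne_bot_iff]
      refine ⟨y, Submodule.mem_inf.mpr ⟨hyY, ?_⟩, fun h => hz0 (by rw [h, zero_mul])⟩
      rw [mem_lann, ← mul_assoc]
      exact mem_lann.mp (Submodule.mem_inf.mp hzK).2
  intro u huU hux
  have : u ∈ K := ⟨huU, mem_lann.mpr hux⟩
  rwa [hKbot, Submodule.mem_bot] at this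

end prime

section gradedess
variable {k : Type*} {R : Type*} [Field k] [Ring R] [Algebra k R]
    (𝒜 : ℕ → Submodule k R) [GradedRing 𝒜]

lemma mem_supp_iff [∀ (i : ℕ) (x : 𝒜 i), Decidable (x ≠ 0)] (v : R) (m : ℕ) :
    m ∈ (decompose 𝒜 v).support ↔ hcmp 𝒜 v m ≠ 0 := by
  rw [DFinsupp.mem_support_iff]
  constructor
  · intro h h'
    exact h (Subtype.ext h')
  · intro h h'
    exact h (by rw [hcmp, h']; rfl)

lemma exists_cmp_ne_zero (v : R) (hv : v ≠ 0) : ∃ j, hcmp 𝒜 v j ≠ 0 := by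
  classical
  by_contra h
  push_neg at h
  apply hv
  rw [← sum_cmp 𝒜 v]
  exact Finset.sum_eq_zero fun m _ => h m

/-- A graded submodule that meets every nonzero graded submodule is essential. -/
lemma graded_essential (V : Submodule R R)
    (hVgr : ∀ v ∈ V, ∀ m : ℕ, hcmp 𝒜 v m ∈ V)
    (hge : ∀ W : Submodule R R, (∀ w ∈ W, ∀ m : ℕ, hcmp 𝒜 w m ∈ W) → W ≠ ⊥ → W ⊓ V ≠ ⊥) :
    ∀ W : Submodule R R, W ≠ ⊥ → W ⊓ V ≠ ⊥ := by
  classical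
  intro W hW
  obtain ⟨w, hwW, hw0⟩ := (Submodule.ne_bot_iff W).mp hW
  set C : Submodule R R := Submodule.span R {w} with hC
  have hCW : C ≤ W := by
    rw [hC, Submodule.span_le, Set.singleton_subset_iff]; exact hwW
  suffices h : ∃ z, z ∈ C ⊓ V ∧ z ≠ 0 by
    obtain ⟨z, hz, hz0⟩ := h
    rw [Submodule.mem_inf] at hz
    rw [Submodule.ne_bot_iff]
    exact ⟨z, Submodule.mem_inf.mpr ⟨hCW hz.1, hz.2⟩, hz0⟩
  set T : Set ℕ := {n | ∃ v, v ∈ C ∧ v ≠ 0 ∧ (decompose 𝒜 v).support.card = n} with hT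
  have hTne : T.Nonempty :=
    ⟨_, w, Submodule.mem_span_singleton_self w, hw0, rfl⟩
  set s : ℕ := sInf T with hs
  have hmin : ∀ v, v ∈ C → v ≠ 0 → s ≤ (decompose 𝒜 v).support.card :=
    fun v h1 h2 => Nat.sInf_le ⟨v, h1, h2, rfl⟩
  have key : ∀ N : ℕ, ∀ v : R, v ∈ C → v ≠ 0 → (decompose 𝒜 v).support.card = s →
      ((decompose 𝒜 v).support.filter (fun m => hcmp 𝒜 v m ∉ V)).card ≤ N →
      ∃ z, z ∈ C ⊓ V ∧ z ≠ 0 := by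
    intro N
    induction N with
    | zero =>
      intro v hvC hv0 _ hbad
      refine ⟨v, Submodule.mem_inf.mpr ⟨hvC, ?_⟩, hv0⟩
      have hfe : (decompose 𝒜 v).support.filter (fun m => hcmp 𝒜 v m ∉ V) = ∅ :=
        Finset.card_eq_zero.mp (Nat.le_zero.mp hbad)
      rw [← sum_cmp 𝒜 v]
      apply Submodule.sum_mem
      intro m hm
      by_contra hmV
      have : m ∈ (decompose 𝒜 v).support.filter (fun m => hcmp 𝒜 v m ∉ V) :=
        Finset.mem_filter.mpr ⟨hm, hmV⟩
      rw [hfe] at this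
      exact absurd this (Finset.notMem_empty m)
    | succ N ih =>
      intro v hvC hv0 hcard hbad
      rcases Finset.eq_empty_or_nonempty
        ((decompose 𝒜 v).support.filter (fun m => hcmp 𝒜 v m ∉ V)) with hfe | ⟨m, hm⟩
      · refine ⟨v, Submodule.mem_inf.mpr ⟨hvC, ?_⟩, hv0⟩
        rw [← sum_cmp 𝒜 v]
        apply Submodule.sum_mem
        intro m hm
        by_contra hmV
        have : m ∈ (decompose 𝒜 v).support.filter (fun m => hcmp 𝒜 v m ∉ V) :=
          Finset.mem_filter.mpr ⟨hm, hmV⟩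
        rw [hfe] at this
        exact absurd this (Finset.notMem_empty m)
      · rw [Finset.mem_filter] at hm
        obtain ⟨hmsupp, hmV⟩ := hm
        set vm : R := hcmp 𝒜 v m with hvm
        have hvm0 : vm ≠ 0 := (mem_supp_iff 𝒜 v m).mp hmsupp
        have hvmhom : vm ∈ 𝒜 m := cmp_mem 𝒜 v m
        set W₀ : Submodule R R := Submodule.span R {vm} with hW₀
        have hW₀gr : ∀ z ∈ W₀, ∀ j : ℕ, hcmp 𝒜 z j ∈ W₀ := by
          intro z hz j
          obtain ⟨r, rfl⟩ := Submodule.mem_span_singleton.mp hz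
          rw [smul_eq_mul, cmp_mul_right 𝒜 hvmhom r j]
          split
          · exact Submodule.smul_mem _ _ (Submodule.mem_span_singleton_self vm)
          · exact Submodule.zero_mem _
        have hW₀ne : W₀ ≠ ⊥ := by
          rw [hW₀, Ne, Submodule.span_singleton_eq_bot]
          exact hvm0
        obtain ⟨z, hzm, hz0⟩ := (Submodule.ne_bot_iff (W₀ ⊓ V)).mp (hge W₀ hW₀gr hW₀ne)
        rw [Submodule.mem_inf] at hzm
        obtain ⟨hzW₀, hzV⟩ := hzm
        obtain ⟨r, rfl⟩ := Submodule.mem_span_singleton.mp hzW₀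
        rw [smul_eq_mul] at hz0 hzV
        obtain ⟨j, hj⟩ := exists_cmp_ne_zero 𝒜 _ hz0
        have hzjV : hcmp 𝒜 (r * vm) j ∈ V := hVgr _ hzV j
        rw [cmp_mul_right 𝒜 hvmhom r j] at hj hzjV
        by_cases hmj : m ≤ j
        · rw [if_pos hmj] at hj hzjV
          set e : ℕ := j - m with he
          set r' : R := hcmp 𝒜 r e with hr'
          have hr'hom : r' ∈ 𝒜 e := cmp_mem 𝒜 r e
          -- components of v' := r' * v
          have hcompA : ∀ i : ℕ, hcmp 𝒜 (r' * v) (e + i) = r' * hcmp 𝒜 v i := by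
            intro i
            rw [cmp_mul_left 𝒜 hr'hom v (e + i), if_pos (Nat.le_add_right e i),
              Nat.add_sub_cancel_left]
          have hsubB : (decompose 𝒜 (r' * v)).support ⊆
              (decompose 𝒜 v).support.image (fun i => e + i) := by
            intro j' hj'
            rw [mem_supp_iff] at hj'
            rw [cmp_mul_left 𝒜 hr'hom v j'] at hj'
            by_cases hej : e ≤ j'
            · rw [if_pos hej] at hj'
              refine Finset.mem_image.mpr ⟨j' - e, ?_, by omega⟩
              rw [mem_supp_iff]
              intro h0
              exact hj' (by rw [h0, mul_zero])
            · rw [if_neg hej] at hj'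
              exact absurd rfl hj'
          have hv'C : r' * v ∈ C := by
            rw [← smul_eq_mul]
            exact Submodule.smul_mem _ _ hvC
          have hv'em : hcmp 𝒜 (r' * v) (e + m) = r' * vm := hcompA m
          have hv'0 : r' * v ≠ 0 := by
            intro h0
            apply hj
            rw [← hv'em, h0, hcmp]
            simp
          have hv'card : (decompose 𝒜 (r' * v)).support.card = s := by
            have h1 : (decompose 𝒜 (r' * v)).support.card ≤ s := by
              calc (decompose 𝒜 (r' * v)).support.card
                  ≤ ((decompose 𝒜 v).support.image (fun i => e + i)).card :=
                    Finset.card_le_card hsubB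
                _ ≤ (decompose 𝒜 v).support.card := Finset.card_image_le
                _ = s := hcard
            exact le_antisymm h1 (hmin _ hv'C hv'0)
          have hbad' : ((decompose 𝒜 (r' * v)).support.filter
              (fun i => hcmp 𝒜 (r' * v) i ∉ V)).card ≤ N := by
            have hsub : ((decompose 𝒜 (r' * v)).support.filter
                (fun i => hcmp 𝒜 (r' * v) i ∉ V)) ⊆
                (((decompose 𝒜 v).support.filter (fun i => hcmp 𝒜 v i ∉ V)).erase m).image
                  (fun i => e + i) := by
              intro j' hj'
              rw [Finset.mem_filter] at hj'
              obtain ⟨hj's, hj'V⟩ := hj'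
              obtain ⟨i, hisupp, rfl⟩ := Finset.mem_image.mp (hsubB hj's)
              refine Finset.mem_image.mpr ⟨i, ?_, rfl⟩
              rw [hcompA i] at hj'V
              have hiV : hcmp 𝒜 v i ∉ V := by
                intro hin
                apply hj'V
                rw [← smul_eq_mul]
                exact Submodule.smul_mem _ _ hin
              have him : i ≠ m := by
                intro h
                apply hj'V
                rw [h, ← hvm]
                exact hzjV
              exact Finset.mem_erase.mpr ⟨him, Finset.mem_filter.mpr ⟨hisupp, hiV⟩⟩
            calc ((decompose 𝒜 (r' * v)).support.filter
                (fun i => hcmp 𝒜 (r' * v) i ∉ V)).card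
                ≤ _ := Finset.card_le_card hsub
              _ ≤ (((decompose 𝒜 v).support.filter
                    (fun i => hcmp 𝒜 v i ∉ V)).erase m).card := Finset.card_image_le
              _ = ((decompose 𝒜 v).support.filter (fun i => hcmp 𝒜 v i ∉ V)).card - 1 :=
                    Finset.card_erase_of_mem (Finset.mem_filter.mpr ⟨hmsupp, hmV⟩)
              _ ≤ N := by omega
          exact ih (r' * v) hv'C hv'0 hv'card hbad'
        · rw [if_neg hmj] at hj
          exact absurd rfl hj
  obtain ⟨v₀, hv₀C, hv₀0, hv₀card⟩ := Nat.sInf_mem hTne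
  exact key _ v₀ hv₀C hv₀0 hv₀card le_rfl

end gradedess

section mainaux
variable {R : Type*} [Ring R]

/-- The linear map `⊕ᵢ U → R` given by `(uᵢ) ↦ ∑ uᵢ xᵢ`. -/
noncomputable def Phi (U : Submodule R R) {t : ℕ} (x : Fin t → R) :
    (⨁ _i : Fin t, U) →ₗ[R] R :=
  DirectSum.toModule R (Fin t) R
    (fun i => (LinearMap.toSpanSingleton R R (x i)).comp U.subtype)

lemma Phi_lof (U : Submodule R R) {t : ℕ} (x : Fin t → R) (i : Fin t) (u : U) :
    Phi U x (DirectSum.lof R (Fin t) (fun _ => U) i u) = (u : R) * x i := by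
  rw [Phi, DirectSum.toModule_lof]
  simp [LinearMap.toSpanSingleton_apply, smul_eq_mul]

lemma Phi_apply (U : Submodule R R) {t : ℕ} (x : Fin t → R) (y : ⨁ _i : Fin t, U) :
    Phi U x y = ∑ i, (y i : R) * x i := by
  conv_lhs => rw [← DirectSum.sum_univ_of y]
  rw [map_sum]
  refine Finset.sum_congr rfl fun i _ => ?_
  rw [← DirectSum.lof_eq_of R, Phi_lof]

/-- The submodule `∑ᵢ U xᵢ`. -/
noncomputable def VS (U : Submodule R R) {t : ℕ} (x : Fin t → R) : Submodule R R :=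
  LinearMap.range (Phi U x)

lemma mem_VS_iff (U : Submodule R R) {t : ℕ} (x : Fin t → R) (v : R) :
    v ∈ VS U x ↔ ∃ u : Fin t → R, (∀ i, u i ∈ U) ∧ v = ∑ i, u i * x i := by
  constructor
  · rintro ⟨y, rfl⟩
    exact ⟨fun i => (y i : R), fun i => (y i).2, Phi_apply U x y⟩
  · rintro ⟨u, hu, rfl⟩
    refine ⟨∑ i, DirectSum.lof R (Fin t) (fun _ => U) i ⟨u i, hu i⟩, ?_⟩
    rw [map_sum]
    exact Finset.sum_congr rfl fun i _ => Phi_lof U x i _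

end mainaux


/-- Let `R` be a prime, noetherian, `ℕ`-graded `k`-algebra and `U` a graded uniform
ideal of `R`.  Then there exist nonnegative integers `n₁, …, n_t` such that
`⊕_{i=1}^t U(−n_i)` is isomorphic, as a graded module, to an essential graded ideal
of `R`. -/
theorem graded_uniform_ideal_shifts_essential
    {k : Type u} {R : Type v} [Field k] [Ring R] [Algebra k R]
    (𝒜 : ℕ → Submodule k R) [GradedRing 𝒜]
    [IsNoetherianRing R] [Nontrivial R]
    (hprime : ∀ a b : R, (∀ r : R, a * r * b = 0) → a = 0 ∨ b = 0)
    (U : Submodule R R) (hU : U ≠ ⊥)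
    (hUgr : ∀ x ∈ U, ∀ m : ℕ, (DirectSum.decompose 𝒜 x m : R) ∈ U)
    (hUuniform : ∀ A B : Submodule R R, A ≤ U → B ≤ U → A ≠ ⊥ → B ≠ ⊥ → A ⊓ B ≠ ⊥) :
    ∃ (t : ℕ) (n : Fin t → ℕ) (V : Submodule R R),
      (∀ x ∈ V, ∀ m : ℕ, (DirectSum.decompose 𝒜 x m : R) ∈ V) ∧
      (∀ W : Submodule R R, W ≠ ⊥ → W ⊓ V ≠ ⊥) ∧
      ∃ e : (⨁ _i : Fin t, U) ≃ₗ[R] V,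
        ∀ (i : Fin t) (m : ℕ) (x : U), (x : R) ∈ 𝒜 m →
          ((e (DirectSum.lof R (Fin t) (fun _ => U) i x) : R) ∈ 𝒜 (m + n i)) := by
  classical
  set S : Set (Submodule R R) :=
    {V | ∃ (t : ℕ) (x : Fin t → R) (d : Fin t → ℕ),
      (∀ i, x i ∈ 𝒜 (d i)) ∧
      (∀ u : Fin t → R, (∀ i, u i ∈ U) → ∑ i, u i * x i = 0 → ∀ i, u i = 0) ∧
      V = VS U x} with hS
  have hSne : S.Nonempty :=
    ⟨VS U (fun i : Fin 0 => i.elim0), 0, (fun i : Fin 0 => i.elim0), (fun i : Fin 0 => i.elim0),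
      fun i => i.elim0, fun u _ _ i => i.elim0, rfl⟩
  obtain ⟨V₀, hV₀S, hV₀max⟩ :=
    (set_has_maximal_iff_noetherian.mpr (inferInstance : IsNoetherian R R)) S hSne
  obtain ⟨t, x, d, hxhom, hindep, rfl⟩ := hV₀S
  -- gradedness of VS U x
  have hVgr : ∀ v ∈ VS U x, ∀ m : ℕ, hcmp 𝒜 v m ∈ VS U x := by
    intro v hv m
    obtain ⟨u, hu, rfl⟩ := (mem_VS_iff U x v).mp hv
    rw [cmp_sum]
    apply Submodule.sum_mem
    intro i _
    rw [cmp_mul_right 𝒜 (hxhom i) (u i) m]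
    split
    · apply (mem_VS_iff U x _).mpr
      refine ⟨fun j => if j = i then hcmp 𝒜 (u i) (m - d i) else 0, fun j => ?_, ?_⟩
      · dsimp only
        split
        · exact hUgr (u i) (hu i) _
        · exact U.zero_mem
      · have hterm : ∀ j ∈ Finset.univ,
            (if j = i then hcmp 𝒜 (u i) (m - d i) else 0) * x j
            = if j = i then hcmp 𝒜 (u i) (m - d i) * x i else 0 := by
          intro j _
          by_cases h : j = i
          · rw [if_pos h, if_pos h, h]
          · rw [if_neg h, if_neg h, zero_mul]
        rw [Finset.sum_congr rfl hterm,
          Finset.sum_ite_eq' Finset.univ i (fun _ => hcmp 𝒜 (u i) (m - d i) * x i),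
          if_pos (Finset.mem_univ i)]
    · exact Submodule.zero_mem _
  -- V₀ meets every nonzero graded submodule (otherwise we could extend the family)
  have hgeV : ∀ W : Submodule R R, (∀ w ∈ W, ∀ m : ℕ, hcmp 𝒜 w m ∈ W) →
      W ≠ ⊥ → W ⊓ VS U x ≠ ⊥ := by
    intro W hWgr hWne hbot
    obtain ⟨u₀, hu₀U, hu₀0⟩ := (Submodule.ne_bot_iff U).mp hU
    obtain ⟨w₀, hw₀W, hw₀0⟩ := (Submodule.ne_bot_iff W).mp hWne
    have hnr : ¬∀ r : R, u₀ * r * w₀ = 0 := by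
      intro h
      rcases hprime u₀ w₀ h with h' | h'
      · exact hu₀0 h'
      · exact hw₀0 h'
    push_neg at hnr
    obtain ⟨r, hr⟩ := hnr
    set w' : R := r * w₀ with hw'
    have hw'W : w' ∈ W := by
      rw [hw', ← smul_eq_mul]
      exact W.smul_mem r hw₀W
    have hr' : u₀ * w' ≠ 0 := by
      rw [hw', ← mul_assoc]
      exact hr
    have hex : ∃ ee : ℕ, u₀ * hcmp 𝒜 w' ee ≠ 0 := by
      by_contra h
      push_neg at h
      apply hr'
      conv_lhs => rw [← sum_cmp 𝒜 w', Finset.mul_sum]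
      exact Finset.sum_eq_zero fun m _ => h m
    obtain ⟨ee, hee⟩ := hex
    set xn : R := hcmp 𝒜 w' ee with hxn
    have hxnW : xn ∈ W := hWgr w' hw'W ee
    have hxnhom : xn ∈ 𝒜 ee := cmp_mem 𝒜 w' ee
    have hinj : ∀ u ∈ U, u * xn = 0 → u = 0 :=
      mul_right_inj_on_uniform hprime U hUuniform hu₀U hee
    set x' : Fin (t + 1) → R := Fin.snoc x xn with hx'
    set d' : Fin (t + 1) → ℕ := Fin.snoc d ee with hd'
    have hx'hom : ∀ i, x' i ∈ 𝒜 (d' i) := by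
      intro i
      refine Fin.lastCases ?_ ?_ i
      · rw [hx', hd', Fin.snoc_last, Fin.snoc_last]
        exact hxnhom
      · intro j
        rw [hx', hd', Fin.snoc_castSucc, Fin.snoc_castSucc]
        exact hxhom j
    have hindep' : ∀ u : Fin (t + 1) → R, (∀ i, u i ∈ U) →
        ∑ i, u i * x' i = 0 → ∀ i, u i = 0 := by
      intro u hu hsum
      rw [Fin.sum_univ_castSucc] at hsum
      have h1 : (∑ i : Fin t, u i.castSucc * x i) + u (Fin.last t) * xn = 0 := by
        simpa [hx', Fin.snoc_castSucc, Fin.snoc_last] using hsum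
      set a : R := ∑ i : Fin t, u i.castSucc * x i with ha
      have haV : a ∈ VS U x :=
        (mem_VS_iff U x a).mpr ⟨fun i => u i.castSucc, fun i => hu _, rfl⟩
      have hbW : u (Fin.last t) * xn ∈ W := by
        rw [← smul_eq_mul]
        exact W.smul_mem _ hxnW
      have hb0 : u (Fin.last t) * xn = 0 := by
        have hmem : u (Fin.last t) * xn ∈ W ⊓ VS U x := by
          refine Submodule.mem_inf.mpr ⟨hbW, ?_⟩
          have : u (Fin.last t) * xn = -a := by
            rw [eq_neg_iff_add_eq_zero, add_comm]
            exact h1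
          rw [this]
          exact Submodule.neg_mem _ haV
        rw [hbot] at hmem
        exact hmem
      have ha0 : a = 0 := by
        rw [hb0, add_zero] at h1
        exact h1
      have hcast : ∀ i : Fin t, u i.castSucc = 0 :=
        hindep (fun i => u i.castSucc) (fun i => hu _) ha0
      have hlast : u (Fin.last t) = 0 :=
        hinj _ (hu _) hb0
      intro i
      refine Fin.lastCases hlast hcast i
    have hV'S : VS U x' ∈ S := ⟨t + 1, x', d', hx'hom, hindep', rfl⟩
    have hle : VS U x ≤ VS U x' := by
      intro v hv
      obtain ⟨u, hu, rfl⟩ := (mem_VS_iff U x v).mp hv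
      refine (mem_VS_iff U x' _).mpr ⟨Fin.snoc u 0, fun i => ?_, ?_⟩
      · refine Fin.lastCases ?_ ?_ i
        · rw [Fin.snoc_last]; exact U.zero_mem
        · intro j; rw [Fin.snoc_castSucc]; exact hu j
      · rw [Fin.sum_univ_castSucc]
        simp [hx', Fin.snoc_castSucc, Fin.snoc_last]
    have hmemnew : u₀ * xn ∈ VS U x' := by
      refine (mem_VS_iff U x' _).mpr ⟨Fin.snoc (fun _ => 0) u₀, fun i => ?_, ?_⟩
      · refine Fin.lastCases ?_ ?_ i
        · rw [Fin.snoc_last]; exact hu₀U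
        · intro j; rw [Fin.snoc_castSucc]; exact U.zero_mem
      · rw [Fin.sum_univ_castSucc]
        simp [hx', Fin.snoc_castSucc, Fin.snoc_last]
    have hnotmem : u₀ * xn ∉ VS U x := by
      intro hmem
      have : u₀ * xn ∈ W ⊓ VS U x := by
        refine Submodule.mem_inf.mpr ⟨?_, hmem⟩
        rw [← smul_eq_mul]
        exact W.smul_mem _ hxnW
      rw [hbot] at this
      exact hee this
    exact hV₀max _ hV'S (lt_of_le_of_ne hle (fun h => hnotmem (h ▸ hmemnew)))
  -- injectivity of Phi
  have hΦinj : Function.Injective (Phi U x) := by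
    rw [← LinearMap.ker_eq_bot]
    rw [Submodule.eq_bot_iff]
    intro y hy
    rw [LinearMap.mem_ker, Phi_apply] at hy
    have := hindep (fun i => (y i : R)) (fun i => (y i).2) hy
    apply DFinsupp.ext
    intro i
    exact Subtype.ext (this i)
  let e' : (⨁ _i : Fin t, U) ≃ₗ[R] (VS U x) := LinearEquiv.ofInjective (Phi U x) hΦinj
  refine ⟨t, d, VS U x, hVgr, graded_essential 𝒜 (VS U x) hVgr hgeV, e', ?_⟩
  intro i m u hum
  have key : (e' (DirectSum.lof R (Fin t) (fun _ => U) i u) : R) = (u : R) * x i := by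
    have h1 : (e' (DirectSum.lof R (Fin t) (fun _ => U) i u) : R)
        = Phi U x (DirectSum.lof R (Fin t) (fun _ => U) i u) := rfl
    rw [h1, Phi_lof]
  rw [key]
  exact SetLike.mul_mem_graded hum (hxhom i)
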